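/- arXiv:2403.08756 — 4 statements merged into one kernel-verified Lean document; each statement's English description precedes it below -/
import Mathlib

section
/- Every k-uniform hypergraph with N vertices and M edges contains an independent set (a set of vertices containing no edge) of size at least N^{k/(k-1)} / (4 (M+N)^{1/(k-1)}). -/
open Finset

private lemma aux_pow_df (k N : ℕ) (h : 4 * (k - 1) ≤ N) :
    3 ^ k * N ^ k ≤ 4 ^ k * N.descFactorial k := by
  induction k with
  | zero => simp
  | succ k ih =>
    have hk : 4 * k ≤ N := by omega
    have ih' := ih (by omega)
    rw [Nat.descFactorial_succ, pow_succ, pow_succ, pow_succ]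
    calc 3 ^ k * 3 * (N ^ k * N) = (3 ^ k * N ^ k) * (3 * N) := by ring
    _ ≤ (4 ^ k * N.descFactorial k) * (4 * (N - k)) :=
        Nat.mul_le_mul ih' (by omega)
    _ = 4 ^ k * 4 * ((N - k) * N.descFactorial k) := by ring

private lemma aux_423 (k : ℕ) (h : 4 ≤ k) : 4 * 2 ^ k ≤ 3 ^ k := by
  induction k with
  | zero => omega
  | succ k ih =>
    rcases Nat.lt_or_ge k 4 with h4 | h4
    · interval_cases k <;> simp_all
    · have := ih h4
      rw [pow_succ, pow_succ]
      nlinarith [Nat.pow_pos (n := k) (show 0 < 2 by norm_num)]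

private lemma count_supersets {V : Type*} [Fintype V] [DecidableEq V]
    (e : Finset V) (t : ℕ) (he : e.card ≤ t) :
    ((Finset.univ.powersetCard t).filter (fun T => e ⊆ T)).card
      = (Fintype.card V - e.card).choose (t - e.card) := by
  have h1 : ((Finset.univ \ e).powersetCard (t - e.card)).card
      = (Fintype.card V - e.card).choose (t - e.card) := by
    rw [Finset.card_powersetCard, Finset.card_sdiff_of_subset (Finset.subset_univ e), Finset.card_univ]
  rw [← h1]
  apply Finset.card_bij (fun T _ => T \ e)
  · intro T hT
    simp only [Finset.mem_filter, Finset.mem_powersetCard] at hT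
    obtain ⟨⟨_, hcard⟩, hsub⟩ := hT
    rw [Finset.mem_powersetCard]
    refine ⟨Finset.sdiff_subset_sdiff (Finset.subset_univ T) Finset.Subset.rfl, ?_⟩
    rw [Finset.card_sdiff_of_subset hsub, hcard]
  · intro T1 hT1 T2 hT2 hEq
    simp only [Finset.mem_filter, Finset.mem_powersetCard] at hT1 hT2
    have e1 : T1 \ e ∪ e = T1 := Finset.sdiff_union_of_subset hT1.2
    have e2 : T2 \ e ∪ e = T2 := Finset.sdiff_union_of_subset hT2.2
    rw [← e1, ← e2, hEq]
  · intro U hU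
    simp only [Finset.mem_powersetCard] at hU
    obtain ⟨hUsub, hUcard⟩ := hU
    have hdisj : Disjoint U e := by
      intro x hx1 hx2 y hy
      have := hUsub (hx1 hy)
      simp only [Finset.mem_sdiff] at this
      exact absurd (hx2 hy) this.2
    refine ⟨U ∪ e, ?_, ?_⟩
    · simp only [Finset.mem_filter, Finset.mem_powersetCard]
      refine ⟨⟨Finset.subset_univ _, ?_⟩, Finset.subset_union_right⟩
      rw [Finset.card_union_of_disjoint hdisj, hUcard]
      omega
    · rw [Finset.union_sdiff_right, Finset.sdiff_eq_self_of_disjoint hdisj]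

private lemma exists_low_T {V : Type*} [Fintype V] [DecidableEq V] (k t : ℕ)
    (E : Finset (Finset V)) (hE : ∀ e ∈ E, e.card = k)
    (hkt : k ≤ t) (htN : t ≤ Fintype.card V) :
    ∃ T : Finset V, T.card = t ∧
      (Fintype.card V).choose t * (E.filter (fun e => e ⊆ T)).card
        ≤ E.card * ((Fintype.card V - k).choose (t - k)) := by
  classical
  set P := (Finset.univ : Finset V).powersetCard t with hP
  have hPcard : P.card = (Fintype.card V).choose t := by
    rw [hP, Finset.card_powersetCard, Finset.card_univ]
  have hPne : P.Nonempty := by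
    rw [← Finset.card_pos, hPcard]
    exact Nat.choose_pos htN
  have hsum : ∑ T ∈ P, (E.filter (fun e => e ⊆ T)).card
      = E.card * ((Fintype.card V - k).choose (t - k)) := by
    have : ∀ T ∈ P, (E.filter (fun e => e ⊆ T)).card
        = ∑ e ∈ E, if e ⊆ T then 1 else 0 := by
      intro T _; rw [Finset.card_filter]
    rw [Finset.sum_congr rfl this, Finset.sum_comm]
    have : ∀ e ∈ E, (∑ T ∈ P, if e ⊆ T then 1 else 0)
        = (Fintype.card V - k).choose (t - k) := by
      intro e he
      rw [← Finset.card_filter]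
      have := count_supersets e t (by rw [hE e he]; exact hkt)
      rw [hE e he] at this
      exact this
    rw [Finset.sum_congr rfl this, Finset.sum_const, smul_eq_mul]
  obtain ⟨T, hTP, hmin⟩ := P.exists_min_image
    (fun T => (E.filter (fun e => e ⊆ T)).card) hPne
  refine ⟨T, (Finset.mem_powersetCard.mp hTP).2, ?_⟩
  calc (Fintype.card V).choose t * (E.filter (fun e => e ⊆ T)).card
      = P.card • (E.filter (fun e => e ⊆ T)).card := by rw [hPcard, smul_eq_mul]
    _ ≤ ∑ T' ∈ P, (E.filter (fun e => e ⊆ T')).card :=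
        Finset.card_nsmul_le_sum P _ _ (fun T' hT' => hmin T' hT')
    _ = _ := hsum

private lemma keyNum (k β M N : ℕ) (hk : 2 ≤ k) (hβ : k ≤ β)
    (hN : 4 * (β - 1) < N)
    (hC1 : 4 ^ (k - 1) * (β - 1) ^ (k - 1) * (M + N) < N ^ k) :
    M * (2 * (β - 1)).descFactorial k < (β - 1) * N.descFactorial k := by
  rcases Nat.lt_or_ge k 4 with hk4 | hk4
  · -- k = 2 or k = 3
    interval_cases k
    · -- k = 2
      set c := β - 1 with hc
      have hc1 : 1 ≤ c := by omega
      norm_num [Nat.descFactorial_succ, Nat.descFactorial_zero] at hC1 ⊢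
      have hN5 : 5 ≤ N := by omega
      zify [show 1 ≤ 2 * c by omega, show 1 ≤ N by omega] at *
      nlinarith [mul_le_mul_of_nonneg_left hC1.le (show (0:ℤ) ≤ c by positivity),
        mul_nonneg (show (0:ℤ) ≤ M by positivity) (show (0:ℤ) ≤ c by positivity),
        mul_nonneg (mul_nonneg (show (0:ℤ) ≤ c - 1 by omega) (show (0:ℤ) ≤ c by positivity))
          (show (0:ℤ) ≤ N by positivity)]
    · -- k = 3
      set c := β - 1 with hc
      have hc2 : 2 ≤ c := by omega
      norm_num [Nat.descFactorial_succ, Nat.descFactorial_zero] at hC1 ⊢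
      have hN9 : 9 ≤ N := by omega
      zify [show 1 ≤ 2 * c by omega, show 2 ≤ 2 * c by omega,
        show 1 ≤ N by omega, show 2 ≤ N by omega] at *
      have h1 : (c:ℤ) * (16 * c ^ 2 * (M + N)) ≤ c * N ^ 3 :=
        mul_le_mul_of_nonneg_left hC1.le (by positivity)
      have h2 : (0:ℤ) ≤ 8 * c * M * (3 * c - 1) :=
        mul_nonneg (by positivity) (by linarith)
      have h3 : (0:ℤ) ≤ c * N * (N ^ 2 - 6 * N + 4) :=
        mul_nonneg (by positivity) (by nlinarith)
      have h4 : (0:ℤ) < 16 * c ^ 3 * N := by positivity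
      nlinarith [h1, h2, h3, h4]
  · -- k ≥ 4
    obtain ⟨j, rfl⟩ : ∃ j, k = j + 1 := ⟨k - 1, by omega⟩
    simp only [Nat.add_sub_cancel] at hC1 ⊢
    have hj : 3 ≤ j := by omega
    have hβ1 : 1 ≤ β - 1 := by omega
    have step1 : M * (2 * (β - 1)).descFactorial (j + 1) * 4 ^ j
        ≤ 2 ^ (j + 1) * (β - 1) * (4 ^ j * (β - 1) ^ j * M) := by
      have h1 : (2 * (β - 1)).descFactorial (j + 1) ≤ (2 * (β - 1)) ^ (j + 1) :=
        Nat.descFactorial_le_pow _ _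
      calc M * (2 * (β - 1)).descFactorial (j + 1) * 4 ^ j
          ≤ M * (2 * (β - 1)) ^ (j + 1) * 4 ^ j := by
            exact Nat.mul_le_mul_right _ (Nat.mul_le_mul_left _ h1)
        _ = 2 ^ (j + 1) * (β - 1) * (4 ^ j * (β - 1) ^ j * M) := by
            rw [mul_pow, pow_succ (β - 1)]
            ring
    have step2 : 2 ^ (j + 1) * (β - 1) * (4 ^ j * (β - 1) ^ j * M)
        < 2 ^ (j + 1) * (β - 1) * N ^ (j + 1) := by
      have hpos : 0 < 2 ^ (j + 1) * (β - 1) := by positivity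
      exact (mul_lt_mul_iff_right₀ hpos).mpr
        (lt_of_le_of_lt (Nat.mul_le_mul_left _ (by omega)) hC1)
    have step3 : 4 * (2 ^ (j + 1) * (β - 1) * N ^ (j + 1))
        ≤ (β - 1) * N.descFactorial (j + 1) * 4 ^ (j + 1) := by
      have hL2 := aux_423 (j + 1) (by omega)
      have hL1 := aux_pow_df (j + 1) N (by simp only [Nat.add_sub_cancel]; omega)
      calc 4 * (2 ^ (j + 1) * (β - 1) * N ^ (j + 1))
          = (β - 1) * (4 * 2 ^ (j + 1) * N ^ (j + 1)) := by ring
        _ ≤ (β - 1) * (3 ^ (j + 1) * N ^ (j + 1)) :=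
            Nat.mul_le_mul_left _ (Nat.mul_le_mul_right _ hL2)
        _ ≤ (β - 1) * (4 ^ (j + 1) * N.descFactorial (j + 1)) := Nat.mul_le_mul_left _ hL1
        _ = (β - 1) * N.descFactorial (j + 1) * 4 ^ (j + 1) := by ring
    have final : M * (2 * (β - 1)).descFactorial (j + 1) * 4 ^ (j + 1)
        < (β - 1) * N.descFactorial (j + 1) * 4 ^ (j + 1) := by
      calc M * (2 * (β - 1)).descFactorial (j + 1) * 4 ^ (j + 1)
          = 4 * (M * (2 * (β - 1)).descFactorial (j + 1) * 4 ^ j) := by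
            rw [pow_succ]; ring
        _ ≤ 4 * (2 ^ (j + 1) * (β - 1) * (4 ^ j * (β - 1) ^ j * M)) := by omega
        _ < 4 * (2 ^ (j + 1) * (β - 1) * N ^ (j + 1)) := by omega
        _ ≤ (β - 1) * N.descFactorial (j + 1) * 4 ^ (j + 1) := step3
    exact Nat.lt_of_mul_lt_mul_right final

/-- Every k-uniform hypergraph with N vertices and M edges contains an independent set
of size at least N^{k/(k-1)} / (4 (M+N)^{1/(k-1)}). -/
theorem stmt0 {V : Type*} [Fintype V] [DecidableEq V] (k : ℕ) (hk : 2 ≤ k)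
    (E : Finset (Finset V)) (hE : ∀ e ∈ E, e.card = k) :
    ∃ S : Finset V, (∀ e ∈ E, ¬ e ⊆ S) ∧
      (Fintype.card V : ℝ) ^ ((k : ℝ) / ((k : ℝ) - 1)) /
        (4 * ((E.card + Fintype.card V : ℕ) : ℝ) ^ ((1 : ℝ) / ((k : ℝ) - 1)))
        ≤ (S.card : ℝ) := by
  classical
  set N := Fintype.card V with hNdef
  set M := E.card with hMdef
  set B : ℝ := (N : ℝ) ^ ((k : ℝ) / ((k : ℝ) - 1)) /
      (4 * ((M + N : ℕ) : ℝ) ^ ((1 : ℝ) / ((k : ℝ) - 1))) with hBdef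
  have hkR : (2:ℝ) ≤ (k:ℝ) := by exact_mod_cast hk
  have hk1R : (0:ℝ) < (k:ℝ) - 1 := by linarith
  have hrpos : (0:ℝ) < (1:ℝ) / ((k:ℝ) - 1) := by positivity
  -- B ≤ N/4 whenever 0 < N
  have hBle : 0 < N → B ≤ (N:ℝ) / 4 := by
    intro hNpos
    have hNR : (0:ℝ) < (N:ℝ) := by exact_mod_cast hNpos
    have hxN : (N:ℝ) ≤ ((M + N : ℕ) : ℝ) := by
      push_cast; linarith [show (0:ℝ) ≤ (M:ℝ) by positivity]
    have hden : (N:ℝ) ^ ((1:ℝ)/((k:ℝ)-1)) ≤ ((M + N : ℕ) : ℝ) ^ ((1:ℝ)/((k:ℝ)-1)) :=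
      Real.rpow_le_rpow hNR.le hxN hrpos.le
    have h1 : B ≤ (N : ℝ) ^ ((k : ℝ) / ((k : ℝ) - 1)) / (4 * (N:ℝ) ^ ((1:ℝ)/((k:ℝ)-1))) := by
      rw [hBdef]
      apply div_le_div_of_nonneg_left (by positivity) (by positivity) (by linarith)
    have hexp : (k:ℝ)/((k:ℝ)-1) = 1 + 1/((k:ℝ)-1) := by field_simp; ring
    have h2 : (N : ℝ) ^ ((k : ℝ) / ((k : ℝ) - 1)) = (N:ℝ) * (N:ℝ) ^ ((1:ℝ)/((k:ℝ)-1)) := by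
      rw [hexp, Real.rpow_add hNR, Real.rpow_one]
    have h3 : (0:ℝ) < (N:ℝ) ^ ((1:ℝ)/((k:ℝ)-1)) := Real.rpow_pos_of_pos hNR _
    calc B ≤ (N : ℝ) ^ ((k : ℝ) / ((k : ℝ) - 1)) / (4 * (N:ℝ) ^ ((1:ℝ)/((k:ℝ)-1))) := h1
      _ = (N:ℝ)/4 := by rw [h2]; field_simp
  by_cases hNk : N < k
  · -- E is empty
    have hEE : E = ∅ := by
      by_contra h
      obtain ⟨e, he⟩ := Finset.nonempty_iff_ne_empty.mpr h
      have := Finset.card_le_univ e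
      rw [hE e he] at this
      omega
    refine ⟨Finset.univ, by simp [hEE], ?_⟩
    rw [Finset.card_univ, ← hNdef]
    rcases Nat.eq_zero_or_pos N with h0 | hpos
    · rw [hBdef, h0]
      have : ((0:ℕ):ℝ) ^ ((k : ℝ) / ((k : ℝ) - 1)) = 0 := by
        rw [Nat.cast_zero, Real.zero_rpow (by positivity)]
      rw [this, zero_div]
      norm_num
    · have := hBle hpos
      have hNR : (0:ℝ) ≤ (N:ℝ) := by positivity
      linarith
  push_neg at hNk
  by_cases hBsm : B ≤ (k:ℝ) - 1
  · obtain ⟨S, hSsub, hScard⟩ := Finset.exists_subset_card_eq (s := (Finset.univ : Finset V)) (n := k-1)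
      (by rw [Finset.card_univ, ← hNdef]; omega)
    refine ⟨S, ?_, ?_⟩
    · intro e he hsub
      have h1 := Finset.card_le_card hsub
      rw [hE e he, hScard] at h1
      omega
    · rw [hScard]
      have : ((k-1:ℕ):ℝ) = (k:ℝ) - 1 := by
        push_cast [Nat.cast_sub (by omega : 1 ≤ k)]; ring
      rw [this]; exact hBsm
  · push_neg at hBsm
    have hBpos : (0:ℝ) < B := lt_trans (by linarith) hBsm
    set β := ⌈B⌉₊ with hβdef
    have hβB : B ≤ (β:ℝ) := Nat.le_ceil B
    have hkβ : k ≤ β := by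
      have h1 : ((k:ℝ) - 1) < (β:ℝ) := lt_of_lt_of_le hBsm hβB
      have h2 : ((k - 1:ℕ):ℝ) < (β:ℝ) := by
        rw [Nat.cast_sub (by omega : 1 ≤ k)]; push_cast; linarith
      have : k - 1 < β := by exact_mod_cast h2
      omega
    have hβ1B : (β:ℝ) - 1 < B := by
      have := Nat.ceil_lt_add_one hBpos.le
      rw [← hβdef] at this
      linarith
    have hNR : (0:ℝ) < (N:ℝ) := by
      have : 0 < N := by omega
      exact_mod_cast this
    have hxpos : (0:ℝ) < ((M + N : ℕ) : ℝ) := by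
      have : 0 < M + N := by omega
      exact_mod_cast this
    -- key real inequality raised to power k-1
    have hb1cast : ((β - 1 : ℕ):ℝ) = (β:ℝ) - 1 := by rw [Nat.cast_sub (by omega : 1 ≤ β)]; norm_num
    have key : ((β:ℝ) - 1) * (4 * ((M + N : ℕ) : ℝ) ^ ((1:ℝ)/((k:ℝ)-1)))
        < (N : ℝ) ^ ((k : ℝ) / ((k : ℝ) - 1)) := by
      rw [← lt_div_iff₀ (by positivity)]
      exact hβ1B
    have hkm1 : (k - 1 : ℕ) ≠ 0 := by omega
    have hpow : (((β:ℝ) - 1) * (4 * ((M + N : ℕ) : ℝ) ^ ((1:ℝ)/((k:ℝ)-1)))) ^ (k-1)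
        < ((N : ℝ) ^ ((k : ℝ) / ((k : ℝ) - 1))) ^ (k-1) := by
      apply pow_lt_pow_left₀ key _ hkm1
      have h1 : (0:ℝ) ≤ (β:ℝ) - 1 := by
        rw [← hb1cast]; positivity
      positivity
    have hcast1 : ((k - 1 : ℕ):ℝ) = (k:ℝ) - 1 := by rw [Nat.cast_sub (by omega : 1 ≤ k)]; norm_num
    have hRHS : ((N : ℝ) ^ ((k : ℝ) / ((k : ℝ) - 1))) ^ (k-1) = (N:ℝ) ^ (k:ℕ) := by
      rw [← Real.rpow_natCast ((N : ℝ) ^ ((k : ℝ) / ((k : ℝ) - 1))) (k-1),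
        ← Real.rpow_mul hNR.le, hcast1]
      rw [div_mul_cancel₀ _ (by linarith : (k:ℝ) - 1 ≠ 0)]
      rw [Real.rpow_natCast]
    have hxr : (((M + N : ℕ) : ℝ) ^ ((1:ℝ)/((k:ℝ)-1))) ^ (k-1) = ((M + N : ℕ) : ℝ) := by
      rw [← Real.rpow_natCast (((M + N : ℕ) : ℝ) ^ ((1:ℝ)/((k:ℝ)-1))) (k-1),
        ← Real.rpow_mul hxpos.le, hcast1]
      rw [div_mul_cancel₀ _ (by linarith : (k:ℝ) - 1 ≠ 0), Real.rpow_one]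
    have hC1R : (4:ℝ) ^ (k-1) * ((β:ℝ) - 1) ^ (k-1) * ((M + N : ℕ) : ℝ) < (N:ℝ) ^ (k:ℕ) := by
      calc (4:ℝ) ^ (k-1) * ((β:ℝ) - 1) ^ (k-1) * ((M + N : ℕ) : ℝ)
          = (((β:ℝ) - 1) * (4 * ((M + N : ℕ) : ℝ) ^ ((1:ℝ)/((k:ℝ)-1)))) ^ (k-1) := by
            rw [mul_pow, mul_pow, hxr]; ring
        _ < ((N : ℝ) ^ ((k : ℝ) / ((k : ℝ) - 1))) ^ (k-1) := hpow
        _ = (N:ℝ) ^ (k:ℕ) := hRHS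
    have hC1 : 4 ^ (k-1) * (β - 1) ^ (k-1) * (M + N) < N ^ k := by
      have := hC1R
      rw [← hb1cast] at this
      exact_mod_cast this
    -- derive 4*(β-1) < N
    have hN4 : 4 * (β - 1) < N := by
      have hkk : k - 1 + 1 = k := by omega
      have h1 : (4 * (β-1)) ^ (k-1) * N < N ^ (k-1) * N := by
        have e1 : (4 * (β-1)) ^ (k-1) * N = 4 ^ (k-1) * (β - 1) ^ (k-1) * N := by
          rw [mul_pow]
        have e2 : N ^ (k-1) * N = N ^ k := by rw [← pow_succ, hkk]
        rw [e1, e2]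
        exact lt_of_le_of_lt (Nat.mul_le_mul_left _ (by omega)) hC1
      have h2 : (4 * (β-1)) ^ (k-1) < N ^ (k-1) := Nat.lt_of_mul_lt_mul_right h1
      by_contra h
      push_neg at h
      exact absurd h2 (not_lt.mpr (Nat.pow_le_pow_left h _))
    -- averaging step
    set t := 2 * (β - 1) with htdef
    have hkt : k ≤ t := by omega
    have htN : t ≤ N := by omega
    obtain ⟨T, hTcard, havg⟩ := exists_low_T k t E hE hkt htN
    set F := E.filter (fun e => e ⊆ T) with hFdef
    set a := F.card with hadef
    have hid : N.choose t * t.choose k = N.choose k * ((N - k).choose (t - k)) :=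
      Nat.choose_mul hkt
    have h5 : (N.choose k * a) * ((N - k).choose (t - k))
        ≤ (M * t.choose k) * ((N - k).choose (t - k)) := by
      calc (N.choose k * a) * ((N - k).choose (t - k))
          = (N.choose t * a) * t.choose k := by rw [mul_right_comm, ← hid]; ring
        _ ≤ (M * ((N - k).choose (t - k))) * t.choose k :=
            Nat.mul_le_mul_right _ havg
        _ = (M * t.choose k) * ((N - k).choose (t - k)) := by ring
    have hDpos : 0 < (N - k).choose (t - k) := Nat.choose_pos (by omega)
    have h6 : N.choose k * a ≤ M * t.choose k := Nat.le_of_mul_le_mul_right h5 hDpos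
    have h7 : a * N.descFactorial k ≤ M * t.descFactorial k := by
      rw [Nat.descFactorial_eq_factorial_mul_choose, Nat.descFactorial_eq_factorial_mul_choose]
      calc a * ((Nat.factorial k) * N.choose k) = (Nat.factorial k) * (N.choose k * a) := by ring
        _ ≤ (Nat.factorial k) * (M * t.choose k) := Nat.mul_le_mul_left _ h6
        _ = M * ((Nat.factorial k) * t.choose k) := by ring
    have h8 : M * t.descFactorial k < (β - 1) * N.descFactorial k :=
      keyNum k β M N hk hkβ hN4 hC1
    have hNdfpos : 0 < N.descFactorial k := by
      rw [Nat.descFactorial_eq_factorial_mul_choose]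
      exact Nat.mul_pos (Nat.factorial_pos k) (Nat.choose_pos hNk)
    have haβ : a < β - 1 := by
      by_contra hcon
      push_neg at hcon
      have : (β - 1) * N.descFactorial k ≤ a * N.descFactorial k :=
        Nat.mul_le_mul_right _ hcon
      omega
    -- construct the independent set
    have hVne : Nonempty V := Fintype.card_pos_iff.mp (by omega)
    have hpick : ∀ e ∈ F, ∃ v ∈ e, v ∈ e := by
      intro e heF
      have heE : e ∈ E := (Finset.mem_filter.mp heF).1
      have : e.Nonempty := by
        rw [← Finset.card_pos, hE e heE]; omega
      exact ⟨this.choose, this.choose_spec, this.choose_spec⟩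
    set pick : Finset V → V := fun s =>
      if h : s.Nonempty then h.choose else Classical.arbitrary V with hpickdef
    set D := F.image pick with hDdef
    refine ⟨T \ D, ?_, ?_⟩
    · intro e he hsub
      have heT : e ⊆ T := hsub.trans Finset.sdiff_subset
      have heF : e ∈ F := by rw [hFdef]; exact Finset.mem_filter.mpr ⟨he, heT⟩
      have hene : e.Nonempty := by rw [← Finset.card_pos, hE e he]; omega
      have hpe : pick e ∈ e := by
        rw [hpickdef]
        simp only [dif_pos hene]
        exact hene.choose_spec
      have hpD : pick e ∈ D := Finset.mem_image_of_mem pick heF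
      have hmem := hsub hpe
      rw [Finset.mem_sdiff] at hmem
      exact hmem.2 hpD
    · have hcard : β ≤ (T \ D).card := by
        have h1 : D.card ≤ a := by rw [hDdef, hadef]; exact Finset.card_image_le
        have h2 : T.card - D.card ≤ (T \ D).card := Finset.le_card_sdiff D T
        rw [hTcard] at h2
        omega
      calc B ≤ (β:ℝ) := hβB
        _ ≤ ((T \ D).card : ℝ) := by exact_mod_cast hcard
end

section
/- Let ⟨·,·⟩ be a nondegenerate symmetric bilinear form on F^d and let S_1, ..., S_k be unit spheres in F^d with centers w_1, ..., w_k. Then there exists an affine subspace U ⊆ F^d such that S_1 ∩ ... ∩ S_k = S_1 ∩ U, and U is orthogonal to the affine span of w_1, ..., w_k (meaning ⟨u − u', v − v'⟩ = 0 for all u, u' ∈ U and v, v' in the affine span of the centers). -/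
/-- The intersection of unit spheres S_1 ∩ ... ∩ S_k equals S_1 ∩ U for an affine subspace U
orthogonal to the affine span of the centers. -/
theorem stmt4 {F : Type*} [Field F] {d k : ℕ} (hchar : (2 : F) ≠ 0)
    (B : (Fin d → F) →ₗ[F] (Fin d → F) →ₗ[F] F)
    (hsymm : ∀ u v, B u v = B v u)
    (hnd : ∀ u, (∀ v, B u v = 0) → u = 0)
    (w : Fin (k + 1) → (Fin d → F)) :
    ∃ U : AffineSubspace F (Fin d → F),
      (⋂ i, {x : Fin d → F | B (x - w i) (x - w i) = 1})
        = {x : Fin d → F | B (x - w 0) (x - w 0) = 1} ∩ (U : Set (Fin d → F)) ∧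
      ∀ u ∈ U, ∀ u' ∈ U, ∀ v ∈ affineSpan F (Set.range w), ∀ v' ∈ affineSpan F (Set.range w),
        B (u - u') (v - v') = 0 := by
  classical
  set c : Fin (k + 1) → F := fun i => B (w i) (w i) - B (w 0) (w 0) with hc
  -- key algebraic identity
  have key : ∀ (x : Fin d → F) (i : Fin (k + 1)),
      B (x - w i) (x - w i)
        = B (x - w 0) (x - w 0) + c i - 2 * B x (w i - w 0) := by
    intro x i
    have h1 : B x (w i) = B (w i) x := hsymm x (w i)
    have h0 : B x (w 0) = B (w 0) x := hsymm x (w 0)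
    simp only [map_sub, LinearMap.sub_apply, hc]
    rw [← h1, ← h0]
    ring
  set S : Set (Fin d → F) := {x | ∀ i, 2 * B x (w i - w 0) = c i} with hS
  refine ⟨{ carrier := S
            smul_vsub_vadd_mem' := ?_ }, ?_, ?_⟩
  · intro t p1 p2 p3 h1 h2 h3 i
    simp only [hS, vsub_eq_sub, vadd_eq_add, Set.mem_setOf_eq] at *
    have e1 := h1 i; have e2 := h2 i; have e3 := h3 i
    simp only [map_sub] at e1 e2 e3
    simp only [map_add, map_sub, map_smul, LinearMap.add_apply, LinearMap.sub_apply,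
      LinearMap.smul_apply, smul_eq_mul]
    linear_combination t * e1 - t * e2 + e3
  · ext x
    simp only [Set.mem_iInter, Set.mem_setOf_eq, Set.mem_inter_iff, SetLike.mem_coe]
    show _ ↔ _ ∧ x ∈ S
    simp only [hS, Set.mem_setOf_eq]
    constructor
    · intro h
      refine ⟨h 0, fun i => ?_⟩
      have hk := key x i
      rw [h i, h 0] at hk
      linear_combination hk
    · rintro ⟨h0, h⟩ i
      rw [key x i, h i, h0]
      ring
  · intro u hu u' hu' v hv v' hv'
    have hu : ∀ i, 2 * B u (w i - w 0) = c i := hu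
    have hu' : ∀ i, 2 * B u' (w i - w 0) = c i := hu'
    have hdiff : ∀ i, B (u - u') (w i - w 0) = 0 := by
      intro i
      have h2 : 2 * B (u - u') (w i - w 0) = 0 := by
        have e1 := hu i; have e2 := hu' i
        simp only [map_sub] at e1 e2
        simp only [map_sub, LinearMap.sub_apply]
        linear_combination e1 - e2
      exact (mul_eq_zero.mp h2).resolve_left hchar
    have main : ∀ z ∈ Submodule.span F (Set.range w -ᵥ Set.range w), B (u - u') z = 0 := by
      intro z hz
      induction hz using Submodule.span_induction with
      | mem z hz =>
          obtain ⟨a, ⟨i, rfl⟩, b, ⟨j, rfl⟩, rfl⟩ := hz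
          have hwij : B (u - u') (w i - w j)
              = B (u - u') (w i - w 0) - B (u - u') (w j - w 0) := by
            simp only [map_sub]; ring
          simpa [vsub_eq_sub, hwij, hdiff i, hdiff j] using hwij.trans (by rw [hdiff i, hdiff j]; ring)
      | zero => simp
      | add z1 z2 _ _ h1 h2 =>
          simp only [map_sub, map_add, LinearMap.sub_apply, LinearMap.add_apply] at h1 h2 ⊢
          linear_combination h1 + h2
      | smul a z _ h =>
          simp only [map_sub, map_smul, LinearMap.sub_apply, LinearMap.smul_apply,
            smul_eq_mul] at h ⊢
          linear_combination a * h
    have hvv : v - v' ∈ vectorSpan F (Set.range w) := by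
      have := AffineSubspace.vsub_mem_direction hv hv'
      rwa [direction_affineSpan] at this
    rw [vectorSpan_def] at hvv
    exact main _ hvv
end

section
/- Let F be a field of characteristic ≠ 2 with a symmetric bilinear form ⟨·,·⟩ on F^d, let S be the unit sphere centered at w, and let V be an affine subspace (flat) with V ⊆ S. Then for all x, y ∈ V: ⟨x − y, x − y⟩ = 0 and ⟨x − w, x − y⟩ = 0. In particular, V is totally isotropic. -/
/-- If an affine flat V is contained in a unit sphere centered at w, then for all x, y ∈ V,
⟨x−y, x−y⟩ = 0 and ⟨x−w, x−y⟩ = 0; in particular V is totally isotropic. -/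
theorem stmt5 {F : Type*} [Field F] {d : ℕ} (hchar : (2 : F) ≠ 0)
    (B : (Fin d → F) →ₗ[F] (Fin d → F) →ₗ[F] F)
    (hsymm : ∀ u v, B u v = B v u)
    (V : AffineSubspace F (Fin d → F)) (w : Fin d → F)
    (hVS : (V : Set (Fin d → F)) ⊆ {x : Fin d → F | B (x - w) (x - w) = 1}) :
    ∀ x ∈ V, ∀ y ∈ V, B (x - y) (x - y) = 0 ∧ B (x - w) (x - y) = 0 := by
  intro x hx y hy
  have hp : ((1 : F) • (x -ᵥ y) +ᵥ x) ∈ V := V.smul_vsub_vadd_mem 1 hx hy hx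
  have h1 : B (x - w) (x - w) = 1 := hVS hx
  have h2 : B (y - w) (y - w) = 1 := hVS hy
  have h3 := hVS hp
  rw [Set.mem_setOf_eq] at h3
  have hxy : ((1 : F) • (x -ᵥ y) +ᵥ x) - w = (x - w) + (x - w) - (y - w) := by
    simp [vsub_eq_sub, vadd_eq_add]; abel
  rw [hxy] at h3
  have hs1 := hsymm x y
  have hs2 := hsymm x w
  have hs3 := hsymm y w
  simp only [map_add, map_sub, LinearMap.add_apply, LinearMap.sub_apply] at h1 h2 h3
  have e1 : (2 : F) * B (x - y) (x - y) = 0 := by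
    simp only [map_sub, LinearMap.sub_apply]
    linear_combination (-2 : F) * h1 + h2 + h3
  have e2 : (2 : F) * ((2 : F) * B (x - w) (x - y)) = 0 := by
    simp only [map_sub, LinearMap.sub_apply]
    linear_combination (-1 : F) * h2 + h3 - 2 * hs1 + 2 * hs2 - 2 * hs3
  refine ⟨(mul_eq_zero.mp e1).resolve_left hchar, ?_⟩
  exact (mul_eq_zero.mp ((mul_eq_zero.mp e2).resolve_left hchar)).resolve_left hchar
end

section
/- Let F be a field in which −1 is not a square, let d = 2k+1, and equip F^d with the bilinear form ⟨u,v⟩_d defined by ⟨u,v⟩_d = u_1v_1 + ... + u_dv_d if d ≢ 1 (mod 4), and ⟨u,v⟩_d = u_1v_1 + ... + u_{d−1}v_{d−1} − u_dv_d if d ≡ 1 (mod 4). Then there is no pair (V, w) where V ⊆ F^d is a totally isotropic affine flat of dimension k and w ∈ F^d is a vector with ⟨w,w⟩_d = 1 that is orthogonal to V (i.e., ⟨w, y − x⟩_d = 0 for all x, y ∈ V). -/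
set_option maxHeartbeats 800000

open Finset

section Aux

variable {F : Type*} [Field F]

/-- The diagonal coefficients of the form. -/
def sgnv (F : Type*) [Field F] (d : ℕ) (j : Fin d) : F :=
  if d % 4 = 1 ∧ (j : ℕ) = d - 1 then -1 else 1

lemma sgnv_sq (d : ℕ) (j : Fin d) : sgnv F d j * sgnv F d j = 1 := by
  unfold sgnv; split_ifs <;> ring

/-- The bilinear form, as a bilinear map. -/
noncomputable def Bfm (F : Type*) [Field F] (d : ℕ) :
    (Fin d → F) →ₗ[F] (Fin d → F) →ₗ[F] F :=
  LinearMap.mk₂ F (fun u v => ∑ j, sgnv F d j * (u j * v j))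
    (by intro x y z; rw [← Finset.sum_add_distrib]
        exact Finset.sum_congr rfl fun j _ => by simp; ring)
    (by intro c x y; simp only [smul_eq_mul, Finset.mul_sum]
        exact Finset.sum_congr rfl fun j _ => by simp; ring)
    (by intro x y z; rw [← Finset.sum_add_distrib]
        exact Finset.sum_congr rfl fun j _ => by simp; ring)
    (by intro c x y; simp only [smul_eq_mul, Finset.mul_sum]
        exact Finset.sum_congr rfl fun j _ => by simp; ring)

lemma Bfm_apply (d : ℕ) (u v : Fin d → F) :
    Bfm F d u v = ∑ j, sgnv F d j * (u j * v j) := rfl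

lemma Bfm_comm (d : ℕ) (u v : Fin d → F) : Bfm F d u v = Bfm F d v u := by
  rw [Bfm_apply, Bfm_apply]
  exact Finset.sum_congr rfl fun j _ => by ring

lemma Bfm_dual (d : ℕ) (ℓ : (Fin d → F) →ₗ[F] F) (u : Fin d → F) :
    Bfm F d (fun m => sgnv F d m * ℓ (Pi.single m 1)) u = ℓ u := by
  have hu : u = ∑ m, u m • (Pi.single m 1 : Fin d → F) := by
    have h1 : ∀ m : Fin d, u m • (Pi.single m 1 : Fin d → F) = Pi.single m (u m) := by
      intro m
      ext j
      simp [Pi.single_apply]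
    rw [Finset.sum_congr rfl fun m _ => h1 m, Finset.univ_sum_single]
  conv_rhs => rw [hu]
  rw [map_sum, Bfm_apply]
  refine Finset.sum_congr rfl fun m _ => ?_
  have h := sgnv_sq (F := F) d m
  rw [map_smul, smul_eq_mul]
  linear_combination (ℓ (Pi.single m 1) * u m) * h

theorem keylem (hF : ∀ x : F, x ^ 2 ≠ -1) (k d : ℕ) (hd : d = 2 * k + 1)
    (e f : Fin k → (Fin d → F)) (w : Fin d → F)
    (hee : ∀ i j, Bfm F d (e i) (e j) = 0)
    (hff : ∀ i j, Bfm F d (f i) (f j) = 0)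
    (hef : ∀ i j, Bfm F d (e i) (f j) = if i = j then 1 else 0)
    (hew : ∀ i, Bfm F d (e i) w = 0)
    (hfw : ∀ i, Bfm F d (f i) w = 0)
    (hww : Bfm F d w w = 1) : False := by
  subst hd
  have h2 : (2 : F) ≠ 0 := by
    intro h
    apply hF 1
    have h1 : (-1 : F) = 1 := by linear_combination -h
    rw [h1, one_pow]
  have hfe : ∀ i j, Bfm F (2 * k + 1) (f i) (e j) = if i = j then 1 else 0 := by
    intro i j; rw [Bfm_comm, hef]; simp [eq_comm]
  have hwe : ∀ i, Bfm F (2 * k + 1) w (e i) = 0 := fun i => by rw [Bfm_comm]; exact hew i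
  have hwf : ∀ i, Bfm F (2 * k + 1) w (f i) = 0 := fun i => by rw [Bfm_comm]; exact hfw i
  -- pairwise products of the new vectors
  have hpp : ∀ i j, Bfm F (2 * k + 1) (e i + f i) (e j + f j) = if i = j then 2 else 0 := by
    intro i j
    simp only [map_add, LinearMap.add_apply, hee, hef, hfe, hff]
    split_ifs <;> ring
  have hqq : ∀ i j, Bfm F (2 * k + 1) (e i - f i) (e j - f j) = if i = j then -2 else 0 := by
    intro i j
    simp only [map_sub, LinearMap.sub_apply, hee, hef, hfe, hff]
    split_ifs <;> ring
  have hpq : ∀ i j, Bfm F (2 * k + 1) (e i + f i) (e j - f j) = 0 := by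
    intro i j
    simp only [map_add, map_sub, LinearMap.add_apply, LinearMap.sub_apply, hee, hef, hfe, hff]
    split_ifs <;> ring
  have hqp : ∀ i j, Bfm F (2 * k + 1) (e i - f i) (e j + f j) = 0 := by
    intro i j
    simp only [map_add, map_sub, LinearMap.add_apply, LinearMap.sub_apply, hee, hef, hfe, hff]
    split_ifs <;> ring
  have hpw : ∀ i, Bfm F (2 * k + 1) (e i + f i) w = 0 := by
    intro i; simp only [map_add, LinearMap.add_apply, hew, hfw]; ring
  have hqw : ∀ i, Bfm F (2 * k + 1) (e i - f i) w = 0 := by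
    intro i; simp only [map_sub, LinearMap.sub_apply, hew, hfw]; ring
  have hwp : ∀ i, Bfm F (2 * k + 1) w (e i + f i) = 0 := by
    intro i; simp only [map_add, hwe, hwf]; ring
  have hwq : ∀ i, Bfm F (2 * k + 1) w (e i - f i) = 0 := by
    intro i; simp only [map_sub, hwe, hwf]; ring
  -- the new family of vectors with diagonal Gram matrix
  set b : Fin (2 * k + 1) → (Fin (2 * k + 1) → F) := fun m =>
    if h : (m : ℕ) < k then e ⟨m, h⟩ + f ⟨m, h⟩
    else if h2 : (m : ℕ) < 2 * k then
      e ⟨(m : ℕ) - k, by omega⟩ - f ⟨(m : ℕ) - k, by omega⟩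
    else w with hb
  set dg : Fin (2 * k + 1) → F := fun m =>
    if (m : ℕ) < k then 2 else if (m : ℕ) < 2 * k then -2 else 1 with hdg
  have hgram : ∀ m n, Bfm F (2 * k + 1) (b m) (b n) = Matrix.diagonal dg m n := by
    intro m n
    rw [Matrix.diagonal_apply, hb, hdg]
    simp only
    by_cases hmn : m = n
    · subst hmn
      rw [if_pos rfl]
      split_ifs with hc1 hc2
      · rw [hpp, if_pos rfl]
      · rw [hqq, if_pos rfl]
      · exact hww
    · have hmn' : (m : ℕ) ≠ (n : ℕ) := fun h => hmn (Fin.ext h)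
      rw [if_neg hmn]
      by_cases h1 : (m : ℕ) < k
      · rw [dif_pos h1]
        by_cases h3 : (n : ℕ) < k
        · rw [dif_pos h3, hpp, if_neg (by simp only [Fin.mk.injEq]; omega)]
        · by_cases h5 : (n : ℕ) < 2 * k
          · rw [dif_neg h3, dif_pos h5]; exact hpq _ _
          · rw [dif_neg h3, dif_neg h5]; exact hpw _
      · by_cases h4 : (m : ℕ) < 2 * k
        · rw [dif_neg h1, dif_pos h4]
          by_cases h3 : (n : ℕ) < k
          · rw [dif_pos h3]; exact hqp _ _
          · by_cases h5 : (n : ℕ) < 2 * k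
            · rw [dif_neg h3, dif_pos h5, hqq, if_neg (by simp only [Fin.mk.injEq]; omega)]
            · rw [dif_neg h3, dif_neg h5]; exact hqw _
        · rw [dif_neg h1, dif_neg h4]
          by_cases h3 : (n : ℕ) < k
          · rw [dif_pos h3]; exact hwp _
          · by_cases h5 : (n : ℕ) < 2 * k
            · rw [dif_neg h3, dif_pos h5]; exact hwq _
            · -- both are the last index, contradiction with m ≠ n
              exact absurd (Fin.ext (by omega)) hmn
  -- the matrix of coordinates
  set E : Matrix (Fin (2 * k + 1)) (Fin (2 * k + 1)) F := Matrix.of (fun m j => b m j) with hE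
  have hEAE : E * Matrix.diagonal (sgnv F (2 * k + 1)) * E.transpose = Matrix.diagonal dg := by
    ext m n
    rw [← hgram m n, Bfm_apply]
    rw [Matrix.mul_apply]
    refine Finset.sum_congr rfl fun j _ => ?_
    rw [Matrix.mul_diagonal, Matrix.transpose_apply]
    simp only [hE, Matrix.of_apply]
    ring
  have hdet : E.det * E.det * (Matrix.diagonal (sgnv F (2 * k + 1))).det
      = (2 : F) ^ k * (-2) ^ k := by
    have h1 : (E * Matrix.diagonal (sgnv F (2 * k + 1)) * E.transpose).det =
        E.det * (Matrix.diagonal (sgnv F (2 * k + 1))).det * E.det := by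
      rw [Matrix.det_mul, Matrix.det_mul, Matrix.det_transpose]
    have h2' : (Matrix.diagonal dg).det = (2 : F) ^ k * (-2) ^ k := by
      rw [Matrix.det_diagonal]
      have hc : ∀ m : Fin (2 * k + 1), dg m =
          (fun i : ℕ => if i < k then (2 : F) else if i < 2 * k then -2 else 1) (m : ℕ) :=
        fun m => rfl
      rw [Finset.prod_congr rfl fun m _ => hc m]
      rw [Fin.prod_univ_eq_prod_range
        (fun i => if i < k then (2 : F) else if i < 2 * k then -2 else 1) (2 * k + 1)]
      have hd2 : 2 * k + 1 = k + k + 1 := by omega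
      rw [hd2, Finset.prod_range_succ, Finset.prod_range_add]
      have e1 : ∀ i ∈ Finset.range k,
          (if i < k then (2:F) else if i < 2*k then -2 else 1) = 2 := by
        intro i hi; rw [Finset.mem_range] at hi; simp [hi]
      have e2 : ∀ i ∈ Finset.range k,
          (if k + i < k then (2:F) else if k + i < 2*k then -2 else 1) = -2 := by
        intro i hi; rw [Finset.mem_range] at hi
        rw [if_neg (by omega), if_pos (by omega)]
      have e3 : (if k + k < k then (2:F) else if k + k < 2*k then -2 else 1) = 1 := by
        rw [if_neg (by omega), if_neg (by omega)]
      rw [Finset.prod_congr rfl e1, Finset.prod_congr rfl e2, e3,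
        Finset.prod_const, Finset.prod_const, Finset.card_range]
      ring
    rw [← h2', ← hEAE, h1]
    ring
  have hdetA : (Matrix.diagonal (sgnv F (2 * k + 1))).det
      = if (2 * k + 1) % 4 = 1 then (-1 : F) else 1 := by
    rw [Matrix.det_diagonal]
    by_cases hP : (2 * k + 1) % 4 = 1
    · rw [if_pos hP]
      have hlt : 2 * k < 2 * k + 1 := by omega
      have hc : ∀ j : Fin (2 * k + 1),
          sgnv F (2 * k + 1) j = if j = (⟨2 * k, hlt⟩ : Fin (2 * k + 1)) then (-1 : F) else 1 := by
        intro j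
        unfold sgnv
        by_cases hj : (j : ℕ) = 2 * k + 1 - 1
        · rw [if_pos ⟨hP, hj⟩, if_pos (Fin.ext (show (j : ℕ) = 2 * k by omega))]
        · rw [if_neg (by tauto), if_neg (fun h => hj (by rw [h]; simp))]
      rw [Finset.prod_congr rfl fun j _ => hc j]
      rw [Finset.prod_ite_eq' Finset.univ (⟨2 * k, hlt⟩ : Fin (2 * k + 1)) (fun _ => (-1 : F))]
      simp
    · rw [if_neg hP]
      have hc : ∀ j : Fin (2 * k + 1), sgnv F (2 * k + 1) j = 1 := by
        intro j; unfold sgnv; rw [if_neg (by tauto)]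
      rw [Finset.prod_congr rfl fun j _ => hc j, Finset.prod_const, one_pow]
  have hpk : (2 : F) ^ k ≠ 0 := pow_ne_zero _ h2
  apply hF (E.det * ((2 : F) ^ k)⁻¹)
  have hneg : (-2 : F) ^ k = (-1) ^ k * 2 ^ k := by rw [← neg_one_mul, mul_pow]
  by_cases hP : (2 * k + 1) % 4 = 1
  · have hkeven : k % 2 = 0 := by omega
    have hk1 : (-1 : F) ^ k = 1 := by
      rw [← Nat.div_add_mod k 2, hkeven, Nat.add_zero, pow_mul]
      norm_num
    rw [hdetA, if_pos hP] at hdet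
    have hdd : E.det * E.det = -(2 ^ k * 2 ^ k) := by
      rw [hneg, hk1] at hdet
      linear_combination -hdet
    field_simp [pow_two]
    linear_combination hdd
  · have hkodd : k % 2 = 1 := by omega
    have hk1 : (-1 : F) ^ k = -1 := by
      rw [← Nat.div_add_mod k 2, hkodd, pow_add, pow_mul]
      norm_num
    rw [hdetA, if_neg hP, mul_one] at hdet
    have hdd : E.det * E.det = -(2 ^ k * 2 ^ k) := by
      rw [hneg, hk1] at hdet
      linear_combination hdet
    field_simp [pow_two]
    linear_combination hdd

end Aux

/-- If −1 is not a square in F and d = 2k+1, then with respect to the form ⟨·,·⟩_d there is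
no pair (V, w) of a totally isotropic k-dimensional affine flat V and a unit-norm vector w
orthogonal to V. -/
theorem stmt6 {F : Type*} [Field F] (hF : ∀ x : F, x ^ 2 ≠ -1) (k d : ℕ) (hd : d = 2 * k + 1)
    (Bf : (Fin d → F) → (Fin d → F) → F)
    (hBf : ∀ u v, Bf u v =
      if d % 4 = 1 then ∑ i : Fin d, (if (i : ℕ) = d - 1 then -(u i * v i) else u i * v i)
      else ∑ i : Fin d, u i * v i) :
    ¬ ∃ (V : AffineSubspace F (Fin d → F)) (w : Fin d → F),
      (V : Set (Fin d → F)).Nonempty ∧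
      Module.finrank F V.direction = k ∧
      (∀ x ∈ V, ∀ y ∈ V, Bf (x - y) (x - y) = 0) ∧
      Bf w w = 1 ∧
      (∀ x ∈ V, ∀ y ∈ V, Bf w (x - y) = 0) := by
  rintro ⟨V, w, hVne, hdim, hiso, hw1, horth⟩
  -- the function Bf agrees with the bilinear map Bfm
  have hBfm : ∀ u v, Bf u v = Bfm F d u v := by
    intro u v
    rw [hBf, Bfm_apply]
    by_cases hP : d % 4 = 1
    · rw [if_pos hP]
      refine Finset.sum_congr rfl fun i _ => ?_
      unfold sgnv
      by_cases hi : (i : ℕ) = d - 1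
      · rw [if_pos hi, if_pos ⟨hP, hi⟩]; ring
      · rw [if_neg hi, if_neg (by tauto)]; ring
    · rw [if_neg hP]
      refine Finset.sum_congr rfl fun i _ => ?_
      unfold sgnv
      rw [if_neg (by tauto)]; ring
  have h2 : (2 : F) ≠ 0 := by
    intro h
    apply hF 1
    have h1 : (-1 : F) = 1 := by linear_combination -h
    rw [h1, one_pow]
  -- membership in the direction
  have hmem : ∀ v ∈ V.direction, ∃ x ∈ V, ∃ y ∈ V, v = x - y := by
    intro v hv
    rw [AffineSubspace.mem_direction_iff_eq_vsub hVne] at hv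
    obtain ⟨x, hx, y, hy, hxy⟩ := hv
    exact ⟨x, hx, y, hy, by rw [hxy, vsub_eq_sub]⟩
  have hW0 : ∀ v ∈ V.direction, Bfm F d v v = 0 := by
    intro v hv
    obtain ⟨x, hx, y, hy, rfl⟩ := hmem v hv
    rw [← hBfm]; exact hiso x hx y hy
  have hwv : ∀ v ∈ V.direction, Bfm F d w v = 0 := by
    intro v hv
    obtain ⟨x, hx, y, hy, rfl⟩ := hmem v hv
    rw [← hBfm]; exact horth x hx y hy
  have hWW : ∀ v₁ ∈ V.direction, ∀ v₂ ∈ V.direction, Bfm F d v₁ v₂ = 0 := by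
    intro v₁ h₁ v₂ h₂
    have hs := hW0 (v₁ + v₂) (Submodule.add_mem _ h₁ h₂)
    have h11 := hW0 v₁ h₁
    have h22 := hW0 v₂ h₂
    have hcomm := Bfm_comm (F := F) d v₁ v₂
    simp only [map_add, LinearMap.add_apply] at hs
    have hz : (2 : F) * Bfm F d v₁ v₂ = 0 := by linear_combination hs - h11 - h22 + hcomm
    exact (mul_eq_zero.mp hz).resolve_left h2
  have hww' : Bfm F d w w = 1 := by rw [← hBfm]; exact hw1
  -- basis of the direction
  have eW : Module.Basis (Fin k) F V.direction := Module.finBasisOfFinrankEq F V.direction hdim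
  set e : Fin k → (Fin d → F) := fun i => ((eW i : V.direction) : Fin d → F) with he
  have heW : ∀ i, e i ∈ V.direction := fun i => (eW i).2
  -- dual functionals
  obtain ⟨Q, hQ⟩ := Submodule.exists_isCompl V.direction
  set ℓ : Fin k → ((Fin d → F) →ₗ[F] F) :=
    fun i => (eW.coord i).comp (V.direction.projectionOnto Q hQ) with hℓ
  have hle : ∀ i j, ℓ i (e j) = if j = i then 1 else 0 := by
    intro i j
    rw [hℓ]
    simp only [LinearMap.comp_apply]
    rw [show e j = ((eW j : V.direction) : Fin d → F) from rfl]
    rw [Submodule.projectionOnto_apply_left hQ (eW j)]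
    rw [Module.Basis.coord_apply, Module.Basis.repr_self, Finsupp.single_apply]
  set g : Fin k → (Fin d → F) := fun i => fun m => sgnv F d m * (ℓ i) (Pi.single m 1) with hgdef
  have hg : ∀ i (u : Fin d → F), Bfm F d (g i) u = ℓ i u := fun i u => Bfm_dual d (ℓ i) u
  have hge : ∀ i j, Bfm F d (g i) (e j) = if i = j then 1 else 0 := by
    intro i j
    rw [hg, hle]
    simp [eq_comm]
  -- adjust to be orthogonal to w
  set hv : Fin k → (Fin d → F) := fun i => g i - (Bfm F d (g i) w) • w with hhv
  have hBsub : ∀ (x y z : Fin d → F), Bfm F d (x - y) z = Bfm F d x z - Bfm F d y z := by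
    intro x y z; rw [map_sub, LinearMap.sub_apply]
  have hBsmul : ∀ (c : F) (x z : Fin d → F), Bfm F d (c • x) z = c * Bfm F d x z := by
    intro c x z; rw [map_smul, LinearMap.smul_apply, smul_eq_mul]
  have hhe : ∀ i j, Bfm F d (hv i) (e j) = if i = j then 1 else 0 := by
    intro i j
    rw [hhv]
    simp only
    rw [hBsub, hBsmul, hge, hwv (e j) (heW j), mul_zero, sub_zero]
  have hhw : ∀ i, Bfm F d (hv i) w = 0 := by
    intro i
    rw [hhv]
    simp only
    rw [hBsub, hBsmul, hww', mul_one, sub_self]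
  -- final correction to make the f's pairwise orthogonal
  set f : Fin k → (Fin d → F) :=
    fun i => hv i - ∑ j, ((Bfm F d (hv i) (hv j)) / 2) • e j with hfdef
  have hBsumR : ∀ (x : Fin d → F) (c : Fin k → F),
      Bfm F d x (∑ j, c j • e j) = ∑ j, c j * Bfm F d x (e j) := by
    intro x c
    rw [map_sum]
    exact Finset.sum_congr rfl fun j _ => by rw [map_smul, smul_eq_mul]
  have hBsumL : ∀ (c : Fin k → F) (y : Fin d → F),
      Bfm F d (∑ j, c j • e j) y = ∑ j, c j * Bfm F d (e j) y := by
    intro c y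
    rw [map_sum, LinearMap.sum_apply]
    exact Finset.sum_congr rfl fun j _ => by
      rw [map_smul, LinearMap.smul_apply, smul_eq_mul]
  have hBsubR : ∀ (x y z : Fin d → F), Bfm F d x (y - z) = Bfm F d x y - Bfm F d x z := by
    intro x y z; rw [map_sub]
  have hfe : ∀ i j, Bfm F d (f i) (e j) = if i = j then 1 else 0 := by
    intro i j
    rw [hfdef]
    simp only
    rw [hBsub]
    have hz : Bfm F d (∑ m, ((Bfm F d (hv i) (hv m)) / 2) • e m) (e j) = 0 := by
      rw [hBsumL]
      refine Finset.sum_eq_zero fun m _ => ?_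
      rw [hWW (e m) (heW m) (e j) (heW j), mul_zero]
    rw [hz, sub_zero, hhe]
  have hfw : ∀ i, Bfm F d (f i) w = 0 := by
    intro i
    rw [hfdef]
    simp only
    rw [hBsub, hhw]
    have hz : Bfm F d (∑ m, ((Bfm F d (hv i) (hv m)) / 2) • e m) w = 0 := by
      rw [hBsumL]
      refine Finset.sum_eq_zero fun m _ => ?_
      rw [Bfm_comm d (e m) w, hwv (e m) (heW m), mul_zero]
    rw [hz, sub_zero]
  have hhfe : ∀ i j, Bfm F d (hv i) (f j) = Bfm F d (hv i) (hv j) - Bfm F d (hv j) (hv i) / 2 := by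
    intro i j
    rw [hfdef]
    simp only
    rw [hBsubR, hBsumR]
    have hz : ∑ m, ((Bfm F d (hv j) (hv m)) / 2) * Bfm F d (hv i) (e m)
        = Bfm F d (hv j) (hv i) / 2 := by
      rw [Finset.sum_congr rfl fun m (_ : m ∈ Finset.univ) => by rw [hhe i m]]
      simp only [mul_ite, mul_one, mul_zero]
      rw [Finset.sum_ite_eq Finset.univ i fun m => Bfm F d (hv j) (hv m) / 2]
      simp
    rw [hz]
  have hff : ∀ i j, Bfm F d (f i) (f j) = 0 := by
    intro i j
    have hstep : Bfm F d (f i) (f j)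
        = Bfm F d (hv i) (f j) - Bfm F d (hv i) (hv j) / 2 := by
      conv_lhs => rw [hfdef]
      simp only
      rw [hBsub]
      have hz : Bfm F d (∑ m, ((Bfm F d (hv i) (hv m)) / 2) • e m) (f j)
          = Bfm F d (hv i) (hv j) / 2 := by
        rw [hBsumL]
        rw [Finset.sum_congr rfl fun m (_ : m ∈ Finset.univ) => by
          rw [Bfm_comm d (e m) (f j), hfe j m]]
        simp only [mul_ite, mul_one, mul_zero]
        rw [Finset.sum_ite_eq Finset.univ j fun m => Bfm F d (hv i) (hv m) / 2]
        simp
      rw [hz]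
    rw [hstep, hhfe, Bfm_comm d (hv j) (hv i)]
    field_simp
    ring
  have hef : ∀ i j, Bfm F d (e i) (f j) = if i = j then 1 else 0 := by
    intro i j
    rw [Bfm_comm, hfe]
    simp [eq_comm]
  have hee : ∀ i j, Bfm F d (e i) (e j) = 0 := fun i j => hWW (e i) (heW i) (e j) (heW j)
  have hew : ∀ i, Bfm F d (e i) w = 0 := fun i => by
    rw [Bfm_comm]; exact hwv (e i) (heW i)
  exact keylem hF k d hd e f w hee hff hef hew hfw hww'
end
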